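/- Let H ∈ (1/2, 1) and c₀ > 0. There exist constants C > 0 and c > 0 (depending only on H and c₀) such that for every a ≥ 0, the convergent infinite product satisfies ∏_{j=1}^∞ (1 + c₀ a² j^{-2H})^{-1/4} ≤ C · exp(-c · a^{1/H}). -/

import Mathlib

/-!
Write the product as `exp (-(1/4) ∑ log (1 + x_j))` with `x_j = c₀ a² (j+1)^{-2H}`; the series
converges since `2H > 1`. Every term is nonnegative, and for the `⌊a^{1/H}⌋` indices with
`j + 1 ≤ a^{1/H}` one has `x_j ≥ c₀`, so the sum is at least `⌊a^{1/H}⌋ log (1 + c₀)`.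
-/

open Real

lemma Real.tprod_one_add_rpow_neg {ι : Type*} {x : ι → ℝ} (hx : ∀ i, -1 < x i)
    (hsum : Summable x) (s : ℝ) :
    ∏' i, (1 + x i) ^ (-s) = exp (-s * ∑' i, log (1 + x i)) := by
  have hprod := ((summable_log_one_add_of_summable hsum).hasSum.mul_left (-s)).rexp
  refine HasProd.tprod_eq ?_
  convert hprod using 1
  funext i
  rw [Function.comp_apply, rpow_def_of_pos (by linarith [hx i]), mul_comm]

lemma natCast_mul_le_tsum_of_le {g : ℕ → ℝ} (hg : Summable g) (hg0 : ∀ j, 0 ≤ g j) {N : ℕ}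
    {δ : ℝ} (hδ : ∀ j < N, δ ≤ g j) : N * δ ≤ ∑' j, g j :=
  calc (N : ℝ) * δ = ∑ _j ∈ Finset.range N, δ := by simp
    _ ≤ ∑ j ∈ Finset.range N, g j := Finset.sum_le_sum fun j hj => hδ j (Finset.mem_range.1 hj)
    _ ≤ ∑' j, g j := hg.sum_le_tsum _ fun j _ => hg0 j

lemma summable_nat_add_one_rpow_neg {p : ℝ} (hp : 1 < p) :
    Summable fun j : ℕ => ((j : ℝ) + 1) ^ (-p) := by
  have h := (summable_nat_add_iff 1).2 (summable_nat_rpow.2 (neg_lt_neg hp))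
  exact h.congr fun j => by push_cast; rfl

lemma one_le_sq_mul_rpow_neg {H a t : ℝ} (hH : 0 < H) (ha : 0 ≤ a) (ht : 0 < t)
    (hta : t ≤ a ^ (1 / H)) : 1 ≤ a ^ 2 * t ^ (-(2 * H)) := by
  have hpow : t ^ (2 * H) ≤ a ^ 2 :=
    calc t ^ (2 * H) ≤ (a ^ (1 / H)) ^ (2 * H) := by gcongr
      _ = a ^ 2 := by
        rw [← rpow_mul ha, one_div_mul_eq_div, mul_div_cancel_right₀ _ hH.ne', rpow_two]
  rw [rpow_neg ht.le, ← div_eq_mul_inv, one_le_div (by positivity)]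
  exact hpow

lemma exp_neg_floor_mul_le {c : ℝ} (hc : 0 ≤ c) (y : ℝ) :
    exp (-(⌊y⌋₊ * c)) ≤ exp c * exp (-c * y) := by
  rw [← exp_add, exp_le_exp]
  nlinarith [Nat.lt_floor_add_one y]

theorem infinite_product_exp_decay_general (H c₀ : ℝ) (hH : 1 / 2 < H) (hc₀ : 0 < c₀) :
    ∃ C > 0, ∃ c > 0, ∀ a : ℝ, 0 ≤ a →
      (∏' j : ℕ, (1 + c₀ * a ^ 2 * ((j : ℝ) + 1) ^ (-(2 * H))) ^ (-(1 / 4) : ℝ))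
        ≤ C * Real.exp (-c * a ^ (1 / H)) := by
  set c := log (1 + c₀) / 4
  have hc : 0 < c := div_pos (log_pos (by linarith)) four_pos
  refine ⟨exp c, exp_pos c, c, hc, fun a ha => ?_⟩
  set x : ℕ → ℝ := fun j => c₀ * a ^ 2 * ((j : ℝ) + 1) ^ (-(2 * H))
  have hx_nonneg : ∀ j, 0 ≤ x j := fun j => by positivity
  have hx_summable : Summable x :=
    (summable_nat_add_one_rpow_neg (by linarith)).mul_left (c₀ * a ^ 2)
  have hx_large : ∀ j < ⌊a ^ (1 / H)⌋₊, c₀ ≤ x j := fun j hj => by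
    have hj : (j : ℝ) + 1 ≤ a ^ (1 / H) := by
      exact_mod_cast (Nat.le_floor_iff (by positivity)).1 hj
    simp only [x, mul_assoc]
    exact le_mul_of_one_le_right hc₀.le
      (one_le_sq_mul_rpow_neg (by linarith) ha (by positivity) hj)
  have hlog_sum := natCast_mul_le_tsum_of_le (δ := log (1 + c₀))
    (summable_log_one_add_of_summable hx_summable)
    (fun j => log_nonneg (by linarith [hx_nonneg j]))
    (fun j hj => log_le_log (by linarith) (by linarith [hx_large j hj]))
  calc ∏' j, (1 + x j) ^ (-(1 / 4) : ℝ) = exp (-(1 / 4) * ∑' j, log (1 + x j)) :=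
        tprod_one_add_rpow_neg (fun j => by linarith [hx_nonneg j]) hx_summable _
    _ ≤ exp (-(⌊a ^ (1 / H)⌋₊ * c)) := by rw [exp_le_exp]; simp only [c]; linarith
    _ ≤ exp c * exp (-c * a ^ (1 / H)) := exp_neg_floor_mul_le hc.le _

/-- Exponential-decay bound for the infinite product controlling second-chaos
characteristic functions: for `H ∈ (1/2, 1)` and `c₀ > 0` there are constants
`C, c > 0` such that for every `a ≥ 0`,
`∏_{j=1}^∞ (1 + c₀ a² j^{-2H})^{-1/4} ≤ C exp(-c a^{1/H})`. -/
theorem infinite_product_exp_decay (H c₀ : ℝ) (hH : 1 / 2 < H) (hH1 : H < 1) (hc₀ : 0 < c₀) :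
    ∃ C > 0, ∃ c > 0, ∀ a : ℝ, 0 ≤ a →
      (∏' j : ℕ, (1 + c₀ * a ^ 2 * ((j : ℝ) + 1) ^ (-(2 * H))) ^ (-(1 / 4) : ℝ))
        ≤ C * Real.exp (-c * a ^ (1 / H)) :=
  infinite_product_exp_decay_general H c₀ hH hc₀
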